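/- Let ∧ be a semilattice operation on A and S = ⟨∧⟩. If f_2 is a nonconstant operation, f_1 is an S-minor of f_2, and f_1 is not S-equivalent to f_2, then either deg_S f_1 < deg_S f_2, or deg_S f_1 = deg_S f_2 = m and for any fixed m-ary g, the set systems X(φ) ⊆ P([m]) arising from minimal S-decompositions f_1 = g(φ'_1,...,φ'_m) and f_2 = g(φ_1,...,φ_m) with φ'_j = φ_j(h_1,...,h_n) differ. -/

import Mathlib

variable {A : Type*}

/-- Composition of an n-ary operation with n m-ary operations. -/
def Comp {n m : ℕ} (f : (Fin n → A) → A) (g : Fin n → (Fin m → A) → A) :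
    (Fin m → A) → A := fun a => f fun i => g i a

/-- A clone: contains all projections and is closed under composition. -/
def IsClone (C : ∀ n, Set ((Fin n → A) → A)) : Prop :=
  (∀ (n : ℕ) (i : Fin n), (fun a : Fin n → A => a i) ∈ C n) ∧
  ∀ (n m : ℕ) (f : (Fin n → A) → A) (g : Fin n → (Fin m → A) → A),
    f ∈ C n → (∀ i, g i ∈ C m) → Comp f g ∈ C m

/-- `f` is a `C`-minor of `g`. -/
def Minor (C : ∀ n, Set ((Fin n → A) → A)) {n m : ℕ}
    (f : (Fin n → A) → A) (g : (Fin m → A) → A) : Prop :=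
  ∃ h : Fin m → (Fin n → A) → A, (∀ i, h i ∈ C n) ∧ f = Comp g h

/-- `f` and `g` are `C`-equivalent. -/
def CEquiv (C : ∀ n, Set ((Fin n → A) → A)) {n m : ℕ}
    (f : (Fin n → A) → A) (g : (Fin m → A) → A) : Prop :=
  Minor C f g ∧ Minor C g f

/-- The clone generated by a family of operations. -/
def CloneGen (F : ∀ n, Set ((Fin n → A) → A)) : ∀ n, Set ((Fin n → A) → A) :=
  fun n => {f | ∀ C, IsClone C → (∀ k, F k ⊆ C k) → f ∈ C n}

/-- The family consisting of just the binary semilattice (meet) operation. -/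
def meetFam (A : Type*) [SemilatticeInf A] : ∀ n, Set ((Fin n → A) → A)
  | 2 => {fun a => a 0 ⊓ a 1}
  | _ => ∅

/-- The clone generated by the semilattice operation `⊓`. -/
def SClone (A : Type*) [SemilatticeInf A] : ∀ n, Set ((Fin n → A) → A) :=
  CloneGen (meetFam A)

/-- The `C`-degree of an operation: 0 for constants, otherwise the least arity of
an outer function in a `C`-decomposition. -/
noncomputable def degC (C : ∀ n, Set ((Fin n → A) → A)) {n : ℕ}
    (f : (Fin n → A) → A) : ℕ :=
  letI := Classical.dec (∃ c : A, f = fun _ => c)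
  if (∃ c : A, f = fun _ => c) then 0
  else sInf {m | ∃ g : (Fin m → A) → A, Minor C f g}

/-! Degrees can only drop along minors. If they stay equal and the two set systems coincide,
substitute for each variable `x'ᵢ` of `f₁ = g(φ')` the meet of those variables `xₖ` of `f₂`
whose incidence set `Xₖ = {j | k ∈ Φ j}` equals `X'ᵢ`: every `φ'ⱼ` then becomes `φⱼ`, so `f₂`
is an `S`-minor of `f₁`, contradicting non-equivalence. -/

open Finset

section Clone

variable {C : ∀ n, Set ((Fin n → A) → A)}

theorem isClone_cloneGen (F : ∀ n, Set ((Fin n → A) → A)) : IsClone (CloneGen F) :=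
  ⟨fun n i _ hC _ => hC.1 n i,
    fun n m f g hf hg C hC hF => hC.2 n m f g (hf C hC hF) fun i => hg i C hC hF⟩

theorem Minor.refl (hC : IsClone C) {n : ℕ} (f : (Fin n → A) → A) : Minor C f f :=
  ⟨fun i a => a i, hC.1 n, rfl⟩

theorem Minor.trans (hC : IsClone C) {n m k : ℕ} {f : (Fin n → A) → A}
    {g : (Fin m → A) → A} {e : (Fin k → A) → A} (hfg : Minor C f g) (hge : Minor C g e) :
    Minor C f e := by
  obtain ⟨h, hh, rfl⟩ := hfg
  obtain ⟨h', hh', rfl⟩ := hge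
  exact ⟨fun i => Comp (h' i) h, fun i => hC.2 _ _ _ _ (hh' i) hh, rfl⟩

theorem degC_le_degC_of_minor (hC : IsClone C) {n₁ n₂ : ℕ} {f₁ : (Fin n₁ → A) → A}
    {f₂ : (Fin n₂ → A) → A} (hmin : Minor C f₁ f₂) : degC C f₁ ≤ degC C f₂ := by
  by_cases hc₁ : ∃ c : A, f₁ = fun _ => c
  · simp [degC, hc₁]
  have hc₂ : ¬ ∃ c : A, f₂ = fun _ => c := by
    rintro ⟨c, rfl⟩
    obtain ⟨h, -, rfl⟩ := hmin
    exact hc₁ ⟨c, rfl⟩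
  simp only [degC, if_neg hc₁, if_neg hc₂]
  refine csInf_le_csInf (OrderBot.bddBelow _) ⟨n₂, f₂, Minor.refl hC f₂⟩ ?_
  rintro m ⟨g, hg⟩
  exact ⟨g, hmin.trans hC hg⟩

end Clone

section Semilattice

variable [SemilatticeInf A]

theorem meet_mem_sClone : (fun a : Fin 2 → A => a 0 ⊓ a 1) ∈ SClone A 2 :=
  fun _ _ hF => hF 2 rfl

theorem inf'_mem_sClone {n : ℕ} {s : Finset (Fin n)} (hs : s.Nonempty) :
    (fun x : Fin n → A => s.inf' hs x) ∈ SClone A n := by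
  have hS : IsClone (SClone A) := isClone_cloneGen _
  induction hs using Finset.Nonempty.cons_induction with
  | singleton a => simpa using hS.1 n a
  | cons a s ha hs ih =>
    have hcons : (fun x : Fin n → A => (s.cons a ha).inf' (cons_nonempty ha) x) =
        Comp (fun a : Fin 2 → A => a 0 ⊓ a 1) ![fun x => x a, fun x => s.inf' hs x] := by
      funext x
      simp [Comp, inf'_insert (H := hs)]
    rw [hcons]
    refine hS.2 2 n _ _ meet_mem_sClone fun i => ?_
    fin_cases i
    · simpa using hS.1 n a
    · simpa using ih

end Semilattice

section SetSystem

variable {m n n' : ℕ}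

/-- The set system `X(φ₁, …, φₘ) = {X₁, …, Xₙ}` of `φⱼ = ⋀_{i ∈ Φ j} xᵢ`,
where `Xᵢ = {j | i ∈ Φ j}`. -/
def setSystem (Φ : Fin m → Finset (Fin n)) : Finset (Finset (Fin m)) :=
  univ.image fun i => univ.filter fun j => i ∈ Φ j

theorem exists_biUnion_eq_of_setSystem_eq {Φ : Fin m → Finset (Fin n)}
    {Φ' : Fin m → Finset (Fin n')} (hX : setSystem Φ = setSystem Φ') :
    ∃ Y : Fin n' → Finset (Fin n), (∀ i', (Y i').Nonempty) ∧ ∀ j, (Φ' j).biUnion Y = Φ j := by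
  let X : Fin n → Finset (Fin m) := fun i => univ.filter fun j => i ∈ Φ j
  let X' : Fin n' → Finset (Fin m) := fun i' => univ.filter fun j => i' ∈ Φ' j
  have himage : univ.image X = univ.image X' := hX
  have hX'X : ∀ i, ∃ i', X' i' = X i := by
    simpa [himage] using fun i => mem_image_of_mem X (mem_univ i)
  have hXX' : ∀ i', ∃ i, X i = X' i' := by
    simpa [← himage] using fun i' => mem_image_of_mem X' (mem_univ i')
  -- `x'ᵢ` is replaced by the meet of the `xₖ` with the same incidence set `Xₖ = X'ᵢ`.
  refine ⟨fun i' => univ.filter fun i => X i = X' i', fun i' => ?_, fun j => ?_⟩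
  · obtain ⟨i, hi⟩ := hXX' i'
    exact ⟨i, by simpa using hi⟩
  · ext i
    have hmem : ∀ i, i ∈ Φ j ↔ j ∈ X i := by simp [X]
    have hmem' : ∀ i', i' ∈ Φ' j ↔ j ∈ X' i' := by simp [X']
    simp only [mem_biUnion, mem_filter, mem_univ, true_and, hmem, hmem']
    constructor
    · rintro ⟨i', hi', hii'⟩
      rwa [hii']
    · intro hi
      obtain ⟨i', hi'⟩ := hX'X i
      exact ⟨i', hi' ▸ hi, hi'.symm⟩

end SetSystem

variable [SemilatticeInf A]

theorem minor_comp_inf'_of_setSystem_eq {m n n' : ℕ} (g : (Fin m → A) → A)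
    {Φ : Fin m → Finset (Fin n)} {Φ' : Fin m → Finset (Fin n')} (hΦ : ∀ j, (Φ j).Nonempty)
    (hΦ' : ∀ j, (Φ' j).Nonempty) (hX : setSystem Φ = setSystem Φ') :
    Minor (SClone A) (Comp g fun j x => (Φ j).inf' (hΦ j) x)
      (Comp g fun j x => (Φ' j).inf' (hΦ' j) x) := by
  obtain ⟨Y, hY, hYΦ⟩ := exists_biUnion_eq_of_setSystem_eq hX
  refine ⟨fun i' x => (Y i').inf' (hY i') x, fun i' => inf'_mem_sClone (hY i'), ?_⟩
  funext x
  refine congrArg g (funext fun j => ?_)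
  show (Φ j).inf' _ x = (Φ' j).inf' _ fun i' => (Y i').inf' _ x
  rw [← inf'_biUnion x (hΦ' j) hY]
  exact inf'_congr _ (hYΦ j).symm fun _ _ => rfl

theorem cEquiv_of_setSystem_eq {m n n' : ℕ} {f : (Fin n → A) → A} {f' : (Fin n' → A) → A}
    (g : (Fin m → A) → A) {Φ : Fin m → Finset (Fin n)} {Φ' : Fin m → Finset (Fin n')}
    (hΦ : ∀ j, (Φ j).Nonempty) (hΦ' : ∀ j, (Φ' j).Nonempty)
    (hf : f = Comp g fun j x => (Φ j).inf' (hΦ j) x)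
    (hf' : f' = Comp g fun j x => (Φ' j).inf' (hΦ' j) x) (hX : setSystem Φ = setSystem Φ') :
    CEquiv (SClone A) f f' := by
  subst hf hf'
  exact ⟨minor_comp_inf'_of_setSystem_eq g hΦ hΦ' hX,
    minor_comp_inf'_of_setSystem_eq g hΦ' hΦ hX.symm⟩

theorem stmt16_general {A : Type*} [SemilatticeInf A] {n₁ n₂ : ℕ}
    (f₁ : (Fin n₁ → A) → A) (f₂ : (Fin n₂ → A) → A)
    (hmin : Minor (SClone A) f₁ f₂)
    (hneq : ¬ CEquiv (SClone A) f₁ f₂) :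
    degC (SClone A) f₁ < degC (SClone A) f₂ ∨
    (degC (SClone A) f₁ = degC (SClone A) f₂ ∧
      ∀ (g : (Fin (degC (SClone A) f₂) → A) → A)
        (φ : Fin (degC (SClone A) f₂) → (Fin n₂ → A) → A)
        (Φ : Fin (degC (SClone A) f₂) → Finset (Fin n₂))
        (hΦ : ∀ j, (Φ j).Nonempty),
        (∀ j, φ j = fun x => (Φ j).inf' (hΦ j) x) →
        f₂ = Comp g φ →
        ∀ h : Fin n₂ → (Fin n₁ → A) → A, (∀ i, h i ∈ SClone A n₁) →
          f₁ = Comp f₂ h →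
          ∀ (Φ' : Fin (degC (SClone A) f₂) → Finset (Fin n₁))
            (hΦ' : ∀ j, (Φ' j).Nonempty),
            (∀ j, Comp (φ j) h = fun x => (Φ' j).inf' (hΦ' j) x) →
            Finset.image (fun i => Finset.univ.filter fun j => i ∈ Φ j)
                (Finset.univ : Finset (Fin n₂)) ≠
              Finset.image (fun i => Finset.univ.filter fun j => i ∈ Φ' j)
                (Finset.univ : Finset (Fin n₁))) := by
  rcases (degC_le_degC_of_minor (isClone_cloneGen _) hmin).lt_or_eq with hlt | hdeg
  · exact Or.inl hlt
  refine Or.inr ⟨hdeg, fun g φ Φ hΦ hφ hf₂ h _ hf₁ Φ' hΦ' hφ' hX => hneq ?_⟩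
  refine cEquiv_of_setSystem_eq g hΦ' hΦ ?_ (hf₂.trans (congrArg _ (funext hφ))) hX.symm
  calc f₁ = Comp f₂ h := hf₁
    _ = Comp (Comp g φ) h := congrArg (fun f => Comp f h) hf₂
    _ = Comp g fun j x => (Φ' j).inf' (hΦ' j) x := congrArg (Comp g) (funext hφ')

/-- If `f₁` is a proper `S`-minor of a nonconstant `f₂` (not `S`-equivalent to
it), then either the `S`-degree strictly drops, or the degrees agree and any
two minimal `S`-decompositions `f₂ = g(φ)` and `f₁ = g(φ')` with
`φ'_j = φ_j(h_1, …, h_n)` have different associated set systems. -/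
theorem stmt16 {A : Type*} [SemilatticeInf A] {n₁ n₂ : ℕ}
    (f₁ : (Fin n₁ → A) → A) (f₂ : (Fin n₂ → A) → A)
    (hnc : ¬ ∃ c : A, f₂ = fun _ => c)
    (hmin : Minor (SClone A) f₁ f₂)
    (hneq : ¬ CEquiv (SClone A) f₁ f₂) :
    degC (SClone A) f₁ < degC (SClone A) f₂ ∨
    (degC (SClone A) f₁ = degC (SClone A) f₂ ∧
      ∀ (g : (Fin (degC (SClone A) f₂) → A) → A)
        (φ : Fin (degC (SClone A) f₂) → (Fin n₂ → A) → A)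
        (Φ : Fin (degC (SClone A) f₂) → Finset (Fin n₂))
        (hΦ : ∀ j, (Φ j).Nonempty),
        (∀ j, φ j = fun x => (Φ j).inf' (hΦ j) x) →
        f₂ = Comp g φ →
        ∀ h : Fin n₂ → (Fin n₁ → A) → A, (∀ i, h i ∈ SClone A n₁) →
          f₁ = Comp f₂ h →
          ∀ (Φ' : Fin (degC (SClone A) f₂) → Finset (Fin n₁))
            (hΦ' : ∀ j, (Φ' j).Nonempty),
            (∀ j, Comp (φ j) h = fun x => (Φ' j).inf' (hΦ' j) x) →
            Finset.image (fun i => Finset.univ.filter fun j => i ∈ Φ j)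
                (Finset.univ : Finset (Fin n₂)) ≠
              Finset.image (fun i => Finset.univ.filter fun j => i ∈ Φ' j)
                (Finset.univ : Finset (Fin n₁))) :=
  stmt16_general f₁ f₂ hmin hneq
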